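/- arXiv:2312.15835 — 2 statements merged into one kernel-verified Lean document; each statement's English description precedes it below -/
import Mathlib

section
/- Let a and b be weighted token sets with ω(a) > 0 and ω(b) > 0, and let 0 < τ ≤ 1 be a real number. If the weighted Dice similarity 2·Σ_t min(a(t), b(t)) / (ω(a) + ω(b)) is at least τ, then Σ_t min(a(t), b(t)) ≥ (τ / (2 − τ)) · ω(a) and Σ_t min(a(t), b(t)) ≥ (τ / 2) · (ω(a) + ω(b)), and moreover (τ / (2 − τ)) · ω(a) ≤ ω(b) ≤ ((2 − τ) / τ) · ω(a). -/
/-!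
The overlap `m = ∑ min (a t) (b t)` is at most both sizes `A` and `B`. Clearing the denominator
of the Dice condition gives `τ (A + B) ≤ 2 m`; bounding `B` below by `m` yields
`τ A ≤ (2 - τ) m`, and symmetrically `τ B ≤ (2 - τ) m`. Combined with `m ≤ B` and `m ≤ A`
these are the two size bounds.
-/

open Function

section WeightedOverlap

variable {T M : Type*} [AddCommMonoid M] [LinearOrder M] [IsOrderedAddMonoid M] {a b : T → M}

theorem finsum_min_le_left (ha : (support a).Finite) (hb : (support b).Finite) :
    ∑ᶠ t, min (a t) (b t) ≤ ∑ᶠ t, a t :=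
  finsum_le_finsum' ((ha.union hb).subset (support_min a b)) ha fun _ => min_le_left _ _

theorem finsum_min_le_right (ha : (support a).Finite) (hb : (support b).Finite) :
    ∑ᶠ t, min (a t) (b t) ≤ ∑ᶠ t, b t :=
  finsum_le_finsum' ((ha.union hb).subset (support_min a b)) hb fun _ => min_le_right _ _

end WeightedOverlap

section DiceArithmetic

variable {K : Type*} [Field K] [LinearOrder K] [IsStrictOrderedRing K]

theorem mul_le_two_sub_mul_of_mul_add_le {τ x y m : K} (hτ : 0 ≤ τ) (hmy : m ≤ y)
    (h : τ * (x + y) ≤ 2 * m) : τ * x ≤ (2 - τ) * m := by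
  nlinarith

theorem div_two_sub_mul_le_of_mul_le {τ x m : K} (hτ : τ < 2) (h : τ * x ≤ (2 - τ) * m) :
    τ / (2 - τ) * x ≤ m := by
  rw [div_mul_eq_mul_div, div_le_iff₀ (sub_pos.mpr hτ)]
  linarith

theorem le_two_sub_div_mul_of_mul_le {τ x y : K} (hτ : 0 < τ) (h : τ * y ≤ (2 - τ) * x) :
    y ≤ (2 - τ) / τ * x := by
  rw [div_mul_eq_mul_div, le_div_iff₀ hτ]
  linarith

end DiceArithmetic

theorem weighted_dice_bounds_general {T : Type*} (a b : T → ℝ)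
    (haf : (Function.support a).Finite) (hbf : (Function.support b).Finite)
    (hωa : 0 < ∑ᶠ t, a t) (hωb : 0 < ∑ᶠ t, b t)
    (τ : ℝ) (hτ0 : 0 < τ) (hτ1 : τ ≤ 1)
    (h : τ ≤ 2 * (∑ᶠ t, min (a t) (b t)) / ((∑ᶠ t, a t) + (∑ᶠ t, b t))) :
    (τ / (2 - τ)) * (∑ᶠ t, a t) ≤ (∑ᶠ t, min (a t) (b t)) ∧
      (τ / 2) * ((∑ᶠ t, a t) + (∑ᶠ t, b t)) ≤ (∑ᶠ t, min (a t) (b t)) ∧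
      (τ / (2 - τ)) * (∑ᶠ t, a t) ≤ (∑ᶠ t, b t) ∧
      (∑ᶠ t, b t) ≤ ((2 - τ) / τ) * (∑ᶠ t, a t) := by
  set A := ∑ᶠ t, a t
  set B := ∑ᶠ t, b t
  set m := ∑ᶠ t, min (a t) (b t)
  have hmA : m ≤ A := finsum_min_le_left haf hbf
  have hmB : m ≤ B := finsum_min_le_right haf hbf
  have hdice : τ * (A + B) ≤ 2 * m := (le_div_iff₀ (add_pos hωa hωb)).mp h
  have hτ2 : τ < 2 := by linarith
  have hA : τ * A ≤ (2 - τ) * m := mul_le_two_sub_mul_of_mul_add_le hτ0.le hmB hdice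
  have hB : τ * B ≤ (2 - τ) * m :=
    mul_le_two_sub_mul_of_mul_add_le hτ0.le hmA (by rwa [add_comm])
  have hmA' : τ / (2 - τ) * A ≤ m := div_two_sub_mul_le_of_mul_le hτ2 hA
  refine ⟨hmA', by linarith, hmA'.trans hmB, le_two_sub_div_mul_of_mul_le hτ0
    (hB.trans (mul_le_mul_of_nonneg_left hmA (sub_pos.mpr hτ2).le))⟩

/-- Weighted Dice overlap lower bound, equivalent overlap, and size bounds. -/
theorem weighted_dice_bounds {T : Type*} (a b : T → ℝ)
    (haf : (Function.support a).Finite) (hbf : (Function.support b).Finite)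
    (ha0 : ∀ t, 0 ≤ a t) (hb0 : ∀ t, 0 ≤ b t)
    (hωa : 0 < ∑ᶠ t, a t) (hωb : 0 < ∑ᶠ t, b t)
    (τ : ℝ) (hτ0 : 0 < τ) (hτ1 : τ ≤ 1)
    (h : τ ≤ 2 * (∑ᶠ t, min (a t) (b t)) / ((∑ᶠ t, a t) + (∑ᶠ t, b t))) :
    (τ / (2 - τ)) * (∑ᶠ t, a t) ≤ (∑ᶠ t, min (a t) (b t)) ∧
      (τ / 2) * ((∑ᶠ t, a t) + (∑ᶠ t, b t)) ≤ (∑ᶠ t, min (a t) (b t)) ∧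
      (τ / (2 - τ)) * (∑ᶠ t, a t) ≤ (∑ᶠ t, b t) ∧
      (∑ᶠ t, b t) ≤ ((2 - τ) / τ) * (∑ᶠ t, a t) :=
  weighted_dice_bounds_general a b haf hbf hωa hωb τ hτ0 hτ1 h
end

section
/- Let a and b be weighted token sets over a linearly ordered token type with ω(a) > 0 and ω(b) > 0, let 0 < τ ≤ 1 be a real number, and let t₀ be a token with a(t₀) > 0 and b(t₀) > 0 such that min(a(s), b(s)) = 0 for all s < t₀. Write p_a = Σ_{s < t₀} a(s), s_a = Σ_{s ≥ t₀} a(s), p_b = Σ_{s < t₀} b(s), s_b = Σ_{s ≥ t₀} b(s). If the weighted Jaccard similarity Σ_t min(a(t), b(t)) / Σ_t max(a(t), b(t)) is at least τ, then s_b ≥ τ · (ω(a) + p_b) and s_b ≤ s_a / τ − p_a − p_b. -/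
/-!
With `I = ∑ min (a t) (b t)` and `U = ∑ max (a t) (b t)` the hypothesis reads `τ * U ≤ I`.
Since `min (a s) (b s) = 0` before `t₀`, the intersection lives in the suffix, so `I ≤ s_a` and
`I ≤ s_b`; and there `max (a s) (b s) = a s + b s`, so `U ≥ p_a + p_b + s_b` and symmetrically
`U ≥ p_a + p_b + s_a = ω(a) + p_b`. Chaining these inequalities gives both bounds.
-/

open Function Set

theorem finsum_mem_le_finsum_mem {α M : Type*} [AddCommMonoid M] [PartialOrder M] [AddLeftMono M]
    {f g : α → M} (hf : f.support.Finite) (hg : g.support.Finite) {s : Set α}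
    (h : ∀ i ∈ s, f i ≤ g i) : ∑ᶠ i ∈ s, f i ≤ ∑ᶠ i ∈ s, g i := by
  rw [finsum_mem_def, finsum_mem_def]
  exact finsum_le_finsum' ((hf.inter_of_right s).subset support_indicator.subset)
    ((hg.inter_of_right s).subset support_indicator.subset) fun i => indicator_le_indicator' (h i)

section TokenWeights

variable {T M : Type*} [LinearOrder T] [AddCommMonoid M]

noncomputable def prefixWeight (a : T → M) (t₀ : T) : M := ∑ᶠ s ∈ Iio t₀, a s

noncomputable def suffixWeight (a : T → M) (t₀ : T) : M := ∑ᶠ s ∈ Ici t₀, a s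

theorem prefixWeight_add_suffixWeight {a : T → M} (ha : a.support.Finite) (t₀ : T) :
    prefixWeight a t₀ + suffixWeight a t₀ = ∑ᶠ t, a t := by
  rw [prefixWeight, suffixWeight, ← finsum_mem_union' (Iio_disjoint_Ici le_rfl)
    (ha.inter_of_right _) (ha.inter_of_right _), Iio_union_Ici, finsum_mem_univ]

variable [LinearOrder M] [IsOrderedAddMonoid M] {a b : T → M} {t₀ : T}

theorem finsum_min_le_suffixWeight (ha : a.support.Finite) (hb : b.support.Finite)
    (hpre : ∀ s < t₀, min (a s) (b s) = 0) : ∑ᶠ t, min (a t) (b t) ≤ suffixWeight b t₀ := by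
  have hmin := (ha.union hb).subset (support_min a b)
  calc ∑ᶠ t, min (a t) (b t) = suffixWeight (fun t => min (a t) (b t)) t₀ := by
        rw [← prefixWeight_add_suffixWeight hmin t₀, prefixWeight,
          finsum_mem_of_eqOn_zero (s := Iio t₀) fun s hs => hpre s hs, zero_add]
    _ ≤ suffixWeight b t₀ := finsum_mem_le_finsum_mem hmin hb fun s _ => min_le_right _ _

theorem prefixWeight_add_prefixWeight_add_suffixWeight_le_finsum_max (ha : a.support.Finite)
    (hb : b.support.Finite) (hpre : ∀ s < t₀, min (a s) (b s) = 0) :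
    prefixWeight a t₀ + prefixWeight b t₀ + suffixWeight b t₀ ≤ ∑ᶠ t, max (a t) (b t) := by
  have hmax := (ha.union hb).subset (support_max a b)
  calc prefixWeight a t₀ + prefixWeight b t₀ + suffixWeight b t₀
      = prefixWeight (fun t => max (a t) (b t)) t₀ + suffixWeight b t₀ := by
        rw [prefixWeight, prefixWeight, prefixWeight,
          ← finsum_mem_add_distrib' (ha.inter_of_right _) (hb.inter_of_right _)]
        congr 1
        exact finsum_mem_congr rfl fun s hs => by rw [← min_add_max, hpre s hs, zero_add]
    _ ≤ prefixWeight (fun t => max (a t) (b t)) t₀ +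
          suffixWeight (fun t => max (a t) (b t)) t₀ := by
        gcongr
        exact finsum_mem_le_finsum_mem hb hmax fun s _ => le_max_right _ _
    _ = ∑ᶠ t, max (a t) (b t) := prefixWeight_add_suffixWeight hmax t₀

end TokenWeights

theorem pps_jaccard_suffix_bounds_general {T : Type*} [LinearOrder T] (a b : T → ℝ)
    (haf : (Function.support a).Finite) (hbf : (Function.support b).Finite)
    (hωa : 0 < ∑ᶠ t, a t)
    (τ : ℝ) (hτ0 : 0 < τ)
    (t₀ : T)
    (hpre : ∀ s, s < t₀ → min (a s) (b s) = 0)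
    (h : τ ≤ (∑ᶠ t, min (a t) (b t)) / (∑ᶠ t, max (a t) (b t))) :
    τ * ((∑ᶠ t, a t) + (∑ᶠ s ∈ Set.Iio t₀, b s)) ≤ (∑ᶠ s ∈ Set.Ici t₀, b s) ∧
      (∑ᶠ s ∈ Set.Ici t₀, b s) ≤
        (∑ᶠ s ∈ Set.Ici t₀, a s) / τ - (∑ᶠ s ∈ Set.Iio t₀, a s) -
          (∑ᶠ s ∈ Set.Iio t₀, b s) := by
  have hpre' : ∀ s < t₀, min (b s) (a s) = 0 := fun s hs => min_comm (a s) (b s) ▸ hpre s hs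
  have hI_a := finsum_min_le_suffixWeight hbf haf hpre'
  have hI_b := finsum_min_le_suffixWeight haf hbf hpre
  have hU_a := prefixWeight_add_prefixWeight_add_suffixWeight_le_finsum_max hbf haf hpre'
  have hU_b := prefixWeight_add_prefixWeight_add_suffixWeight_le_finsum_max haf hbf hpre
  simp only [min_comm (b _), max_comm (b _)] at hI_a hU_a
  have hωa_le : ∑ᶠ t, a t ≤ ∑ᶠ t, max (a t) (b t) :=
    finsum_le_finsum' haf ((haf.union hbf).subset (support_max a b)) fun t => le_max_left _ _
  have hτU : τ * ∑ᶠ t, max (a t) (b t) ≤ ∑ᶠ t, min (a t) (b t) :=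
    (le_div_iff₀ (hωa.trans_le hωa_le)).mp h
  show τ * ((∑ᶠ t, a t) + prefixWeight b t₀) ≤ suffixWeight b t₀ ∧
    suffixWeight b t₀ ≤ suffixWeight a t₀ / τ - prefixWeight a t₀ - prefixWeight b t₀
  constructor
  · calc τ * ((∑ᶠ t, a t) + prefixWeight b t₀)
        = τ * (prefixWeight b t₀ + prefixWeight a t₀ + suffixWeight a t₀) := by
          rw [← prefixWeight_add_suffixWeight haf t₀]; ring
      _ ≤ τ * ∑ᶠ t, max (a t) (b t) := by gcongr
      _ ≤ suffixWeight b t₀ := hτU.trans hI_b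
  · rw [sub_sub, le_sub_iff_add_le, le_div_iff₀ hτ0]
    calc (suffixWeight b t₀ + (prefixWeight a t₀ + prefixWeight b t₀)) * τ
        = τ * (prefixWeight a t₀ + prefixWeight b t₀ + suffixWeight b t₀) := by ring
      _ ≤ τ * ∑ᶠ t, max (a t) (b t) := by gcongr
      _ ≤ suffixWeight a t₀ := hτU.trans hI_a

/-- Position-enhanced index suffix bounds for weighted Jaccard (PPS filter). -/
theorem pps_jaccard_suffix_bounds {T : Type*} [LinearOrder T] (a b : T → ℝ)
    (haf : (Function.support a).Finite) (hbf : (Function.support b).Finite)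
    (ha0 : ∀ t, 0 ≤ a t) (hb0 : ∀ t, 0 ≤ b t)
    (hωa : 0 < ∑ᶠ t, a t) (hωb : 0 < ∑ᶠ t, b t)
    (τ : ℝ) (hτ0 : 0 < τ) (hτ1 : τ ≤ 1)
    (t₀ : T) (hat : 0 < a t₀) (hbt : 0 < b t₀)
    (hpre : ∀ s, s < t₀ → min (a s) (b s) = 0)
    (h : τ ≤ (∑ᶠ t, min (a t) (b t)) / (∑ᶠ t, max (a t) (b t))) :
    τ * ((∑ᶠ t, a t) + (∑ᶠ s ∈ Set.Iio t₀, b s)) ≤ (∑ᶠ s ∈ Set.Ici t₀, b s) ∧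
      (∑ᶠ s ∈ Set.Ici t₀, b s) ≤
        (∑ᶠ s ∈ Set.Ici t₀, a s) / τ - (∑ᶠ s ∈ Set.Iio t₀, a s) -
          (∑ᶠ s ∈ Set.Iio t₀, b s) :=
  pps_jaccard_suffix_bounds_general a b haf hbf hωa τ hτ0 t₀ hpre h
end
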